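/- Let H be a real inner product space, L : H → H linear, symmetric, and nonnegative. For a finite sequence U⁰,…,U^N in H and positive time steps k₁,…,k_N, set A := ∑_{n=1}^N k_n ‖(U^n − U^{n−1})/k_n + L U^n‖². Then ∑_{n=1}^N k_n ‖(U^n − U^{n−1})/k_n‖² + ∑_{n=1}^N k_n ‖L U^n‖² ≤ A + ⟨L U⁰, U⁰⟩. -/
import Mathlib


open scoped RealInnerProductSpace

private lemma tele_sum {N : ℕ} (f : Fin (N + 1) → ℝ) :
    ∑ n : Fin N, (f n.succ - f n.castSucc) = f (Fin.last N) - f 0 := by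
  induction N with
  | zero => simp
  | succ N ih =>
    rw [Fin.sum_univ_castSucc]
    have := ih (fun i => f i.castSucc)
    simp only [Fin.succ_castSucc] at this ⊢
    rw [this]
    simp [Fin.succ_last]

theorem discrete_maximal_regularity
    {H : Type*} [NormedAddCommGroup H] [InnerProductSpace ℝ H]
    (L : H →ₗ[ℝ] H)
    (hsym : ∀ x y : H, ⟪L x, y⟫ = ⟪x, L y⟫)
    (hpos : ∀ x : H, 0 ≤ ⟪L x, x⟫)
    (N : ℕ) (U : Fin (N + 1) → H)
    (k : Fin N → ℝ) (hk : ∀ n, 0 < k n)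
    (A : ℝ)
    (hA : A = ∑ n : Fin N,
      k n * ‖(k n)⁻¹ • (U n.succ - U n.castSucc) + L (U n.succ)‖ ^ 2) :
    ∑ n : Fin N, k n * ‖(k n)⁻¹ • (U n.succ - U n.castSucc)‖ ^ 2
      + ∑ n : Fin N, k n * ‖L (U n.succ)‖ ^ 2
      ≤ A + ⟪L (U 0), U 0⟫ := by
  set q : Fin (N + 1) → ℝ := fun i => ⟪L (U i), U i⟫ with hq
  have key : ∀ n : Fin N,
      k n * ‖(k n)⁻¹ • (U n.succ - U n.castSucc)‖ ^ 2
        + k n * ‖L (U n.succ)‖ ^ 2 + (q n.succ - q n.castSucc)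
      ≤ k n * ‖(k n)⁻¹ • (U n.succ - U n.castSucc) + L (U n.succ)‖ ^ 2 := by
    intro n
    set v := (k n)⁻¹ • (U n.succ - U n.castSucc) with hv
    set w := L (U n.succ) with hw
    have hexp : ‖v + w‖ ^ 2 = ‖v‖ ^ 2 + 2 * ⟪v, w⟫ + ‖w‖ ^ 2 := by
      rw [norm_add_sq_real]
    have hcross : k n * ⟪v, w⟫ = ⟪U n.succ - U n.castSucc, w⟫ := by
      rw [hv, real_inner_smul_left, ← mul_assoc, mul_inv_cancel₀ (hk n).ne', one_mul]
    have hLd : 0 ≤ ⟪L (U n.succ - U n.castSucc), U n.succ - U n.castSucc⟫ :=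
      hpos _
    have hsym1 : ⟪L (U n.castSucc), U n.succ⟫ = ⟪U n.castSucc, L (U n.succ)⟫ :=
      hsym _ _
    have hexp2 : ⟪L (U n.succ - U n.castSucc), U n.succ - U n.castSucc⟫
        = q n.succ - 2 * ⟪U n.castSucc, L (U n.succ)⟫ + q n.castSucc := by
      rw [map_sub, inner_sub_left, inner_sub_right, inner_sub_right, hq]
      simp only
      rw [← hsym1]
      have : ⟪L (U n.succ), U n.castSucc⟫ = ⟪U n.castSucc, L (U n.succ)⟫ :=
        real_inner_comm _ _
      rw [this, ← hsym1]
      ring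
    have hd : q n.succ - q n.castSucc ≤ 2 * ⟪U n.succ - U n.castSucc, w⟫ := by
      rw [hw, inner_sub_left]
      have h1 : ⟪U n.succ, L (U n.succ)⟫ = q n.succ := (hsym _ _).symm
      rw [h1]
      nlinarith [hLd, hexp2]
    have hkpos := hk n
    nlinarith [hd, hexp, hcross, mul_le_mul_of_nonneg_left hd (le_of_lt hkpos)]
  have hsum := Finset.sum_le_sum (s := Finset.univ) (fun n _ => key n)
  rw [Finset.sum_add_distrib, Finset.sum_add_distrib, tele_sum q, ← hA] at hsum
  have hlast : 0 ≤ q (Fin.last N) := hpos _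
  have h0 : q 0 = ⟪L (U 0), U 0⟫ := rfl
  linarith
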